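/- The following are equivalent: (1) range E = ker(N₀ − z₀); (2) every nonzero φ ∈ ker(N₀ − z₀) is non-orthogonal to some vector of ker(N₀* − conj(z₀)); (3) the orthogonal projection of ℋ onto ker(N₀* − conj(z₀)) restricts to a linear isomorphism from ker(N₀ − z₀) onto ker(N₀* − conj(z₀)); (4) D = 0; (5) range E* = ker(N₀* − conj(z₀)); (6) every nonzero ψ ∈ ker(N₀* − conj(z₀)) is non-orthogonal to some vector of ker(N₀ − z₀); (7) the orthogonal projection of ℋ onto ker(N₀ − z₀) restricts to a linear isomorphism from ker(N₀* − conj(z₀)) onto ker(N₀ − z₀); (8) D* = 0. (An isolated eigenvalue z₀ satisfying these conditions is called semisimple.) -/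

import Mathlib

open Complex MeasureTheory ContinuousLinearMap
open scoped InnerProductSpace

/-- The Riesz projection `E = -(2πi)⁻¹ ∮_{|ζ-z₀|=ρ₀} (N₀ - ζ)⁻¹ dζ`, expressed via a
given resolvent function `Res`. -/
noncomputable def rieszE {H : Type*} [NormedAddCommGroup H] [NormedSpace ℂ H]
    (Res : ℂ → (H →L[ℂ] H)) (z₀ : ℂ) (ρ₀ : ℝ) : H →L[ℂ] H :=
  -((2 * (Real.pi : ℂ) * Complex.I)⁻¹ • ∮ ζ in C(z₀, ρ₀), Res ζ)

/-- The associated nilpotent `D = -(2πi)⁻¹ ∮_{|ζ-z₀|=ρ₀} (ζ - z₀)(N₀ - ζ)⁻¹ dζ`. -/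
noncomputable def rieszD {H : Type*} [NormedAddCommGroup H] [NormedSpace ℂ H]
    (Res : ℂ → (H →L[ℂ] H)) (z₀ : ℂ) (ρ₀ : ℝ) : H →L[ℂ] H :=
  -((2 * (Real.pi : ℂ) * Complex.I)⁻¹ • ∮ ζ in C(z₀, ρ₀), (ζ - z₀) • Res ζ)

/-!
Write `M = N₀ - z₀` and `E = rieszE Res z₀ ρ₀`. Integrating `(N₀ - z₀) Res ζ = 1 + (ζ - z₀) Res ζ`
over the circle gives `D = M E = E M`; the resolvent identity together with Cauchy's theorem
(comparing the circles of radii `ρ₀ / 2` and `ρ₀`) gives `E² = E`; and `E φ = φ` for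
`φ ∈ ker M` by the Cauchy formula. On the finite-dimensional range of `E`, `M` has no eigenvalue
`μ ≠ 0`: `z₀ + μ` would lie either in the punctured disc, where `N₀ - ζ` is invertible, or outside
the circle, where `E` annihilates its eigenvectors. So `M` is nilpotent on `range E`.

Since `ker M* = (range M)ᗮ`, condition (2) says that `ker M` meets `closure (range M)` only in `0`,
which forces `ker Mⁿ = ker M`, hence `range E ⊆ ker M`. Conversely, if `D = E M = 0` then `E`
vanishes on `closure (range M) = (ker M*)ᗮ` while it fixes `ker M`, which is (2). Condition (3)
is (2) plus the equality of dimensions. Finally `E*` and `D*` are the Riesz projection and the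
nilpotent of `N₀*` at `z̄₀` for the resolvent `ζ ↦ (Res ζ̄)*` (conjugation reverses the
orientation of the circle, which cancels the sign of `conj (2πi)⁻¹`), so (5)–(8) are (1)–(4) for
`N₀*`, and `D = 0 ↔ D* = 0`.
-/

open Metric Set
open scoped ComplexConjugate Real

theorem Module.End.isNilpotent_of_forall_hasEigenvalue {K V : Type*} [Field K] [IsAlgClosed K]
    [AddCommGroup V] [Module K V] [FiniteDimensional K V] {f : Module.End K V}
    (hf : ∀ μ, f.HasEigenvalue μ → μ = 0) : IsNilpotent f := by
  have hroots : (minpoly K f).roots = Multiset.replicate (minpoly K f).roots.card 0 :=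
    Multiset.eq_replicate_card.2 fun μ hμ =>
      hf μ (Module.End.hasEigenvalue_iff_isRoot.2 (Polynomial.isRoot_of_mem_roots hμ))
  have hprod := (IsAlgClosed.splits (minpoly K f)).eq_prod_roots_of_monic
    (minpoly.monic (Algebra.IsIntegral.isIntegral f))
  rw [hroots] at hprod
  have hmin := minpoly.aeval K f
  rw [hprod] at hmin
  exact ⟨_, by simpa using hmin⟩

section CircleIntegral

variable {E F : Type*} [NormedAddCommGroup E] [NormedSpace ℂ E] [CompleteSpace E]
  [NormedAddCommGroup F] [NormedSpace ℂ F] [CompleteSpace F]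

theorem circleIntegral_const (a : E) (c : ℂ) (R : ℝ) : ∮ _ in C(c, R), a = 0 := by
  have h1 : ∮ _ in C(c, R), (1 : ℂ) = 0 := by
    simpa using circleIntegral.integral_sub_zpow_of_ne (n := 0) (by norm_num) c c R
  simpa [h1] using circleIntegral.integral_smul_const (fun _ => (1 : ℂ)) a c R

theorem ContinuousLinearMap.circleIntegral_comp_comm (L : E →L[ℂ] F) {f : ℂ → E} {c : ℂ}
    {R : ℝ} (hf : CircleIntegrable f c R) : ∮ ζ in C(c, R), L (f ζ) = L (∮ ζ in C(c, R), f ζ) := by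
  simp only [circleIntegral, ← L.intervalIntegral_comp_comm hf.out, map_smul]

theorem circleIntegral_sub_inv_of_notMem_closedBall {c w : ℂ} {R : ℝ} (hR : 0 ≤ R)
    (hw : w ∉ closedBall c R) : ∮ ζ in C(c, R), (ζ - w)⁻¹ = 0 := by
  have hne : ∀ ζ ∈ closedBall c R, ζ - w ≠ 0 := fun ζ hζ h => hw (sub_eq_zero.1 h ▸ hζ)
  refine circleIntegral_eq_zero_of_differentiable_on_off_countable hR Set.countable_empty
    ((continuous_id.sub continuous_const).continuousOn.inv₀ hne) fun ζ hζ => ?_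
  exact (differentiableAt_id.sub_const w).inv (hne ζ (ball_subset_closedBall hζ.1))

theorem differentiableOn_circleIntegral_sub_inv_smul {f : ℂ → E} {c : ℂ} {R : ℝ}
    (hf : CircleIntegrable f c R) :
    DifferentiableOn ℂ (fun w => ∮ ζ in C(c, R), (ζ - w)⁻¹ • f ζ) (ball c R) := by
  rcases le_or_gt R 0 with hR | hR
  · simp [ball_eq_empty.2 hR, differentiableOn_empty]
  lift R to NNReal using hR.le
  have hA := (hasFPowerSeriesOn_cauchy_integral hf (mod_cast hR)).differentiableOn.const_smul
    (2 * (Real.pi : ℂ) * I)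
  rw [← Metric.eball_coe]
  refine hA.congr fun w _ => ?_
  simp only [Pi.smul_apply, smul_smul, mul_inv_cancel₀ two_pi_I_ne_zero, one_smul]

theorem circleIntegral_circleIntegral_sub_inv_smul_eq_zero {f : ℂ → E} {c : ℂ} {r R : ℝ}
    (hf : CircleIntegrable f c R) (hr : 0 ≤ r) (hrR : r < R) :
    ∮ w in C(c, r), ∮ ζ in C(c, R), (ζ - w)⁻¹ • f ζ = 0 :=
  ((differentiableOn_circleIntegral_sub_inv_smul hf).diffContOnCl_ball
    (closedBall_subset_ball hrR)).circleIntegral_eq_zero hr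

end CircleIntegral

section Star

variable {A : Type*} [NormedAddCommGroup A] [NormedSpace ℂ A] [CompleteSpace A] [StarAddMonoid A]
  [StarModule ℂ A] [ContinuousStar A]

theorem star_circleIntegral {f : ℂ → A} {c : ℂ} {R : ℝ} (hf : CircleIntegrable f c R) :
    star (∮ ζ in C(c, R), f ζ) = -∮ ζ in C(conj c, R), star (f (conj ζ)) := by
  set g : ℝ → A := fun θ => conj (deriv (circleMap c R) θ) • star (f (circleMap c R θ))
  have hstar : star (∮ ζ in C(c, R), f ζ) = ∫ θ in 0..2 * π, g θ := by
    have := ((starL' ℝ : A ≃L[ℝ] A) : A →L[ℝ] A).intervalIntegral_comp_comm hf.out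
    simp only [ContinuousLinearEquiv.coe_coe, starL'_apply, star_smul] at this
    rw [circleIntegral, ← this]
    rfl
  have hreflect : ∮ ζ in C(conj c, R), star (f (conj ζ)) = -∫ θ in 0..2 * π, g (-θ) := by
    rw [circleIntegral, ← intervalIntegral.integral_neg]
    refine intervalIntegral.integral_congr fun θ _ => ?_
    simp [g, conj_circleMap, deriv_circleMap, circleMap_zero, ← exp_conj]
  have hper : Function.Periodic g (2 * π) := fun θ => by
    simp [g, periodic_circleMap c R θ, periodic_circleMap 0 R θ]
  rw [hstar, hreflect, neg_neg, intervalIntegral.integral_comp_neg, neg_zero]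
  simpa using (hper.intervalIntegral_add_eq (-(2 * π)) 0).symm

end Star

section Hilbert

variable {𝕜 H : Type*} [RCLike 𝕜] [NormedAddCommGroup H] [InnerProductSpace 𝕜 H]

theorem Submodule.bijective_orthogonalProjectionOnto_iff {V W : Submodule 𝕜 H}
    [FiniteDimensional 𝕜 V] [FiniteDimensional 𝕜 W]
    (hdim : Module.finrank 𝕜 V = Module.finrank 𝕜 W) :
    Function.Bijective (fun φ : V => W.orthogonalProjectionOnto (φ : H)) ↔
      ∀ φ ∈ V, φ ≠ 0 → ∃ ψ ∈ W, ⟪ψ, φ⟫_𝕜 ≠ 0 := by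
  let L : V →ₗ[𝕜] W := (W.orthogonalProjectionOnto : H →ₗ[𝕜] W).comp V.subtype
  have hL : ∀ φ : V, L φ = W.orthogonalProjectionOnto (φ : H) := fun _ => rfl
  change Function.Bijective L ↔ _
  rw [Function.Bijective,
    and_iff_left_of_imp (LinearMap.injective_iff_surjective_of_finrank_eq_finrank hdim).1]
  simp only [injective_iff_map_eq_zero, hL, orthogonalProjectionOnto_eq_zero_iff]
  constructor
  · intro hinj φ hφ hφ₀
    by_contra! hperp
    exact hφ₀ congr(Subtype.val $(hinj ⟨φ, hφ⟩ ((W.mem_orthogonal φ).2 hperp)))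
  · rintro hV ⟨φ, hφ⟩ hLφ
    by_contra hφ₀
    obtain ⟨ψ, hψ, hne⟩ := hV φ hφ (by simpa using hφ₀)
    exact hne ((W.mem_orthogonal φ).1 hLφ ψ hψ)

variable [CompleteSpace H]

theorem ContinuousLinearMap.apply_eq_zero_of_pow_apply_eq_zero {M : H →L[𝕜] H}
    (hM : ∀ φ ∈ LinearMap.ker (M : H →ₗ[𝕜] H), φ ≠ 0 →
      ∃ ψ ∈ LinearMap.ker ((adjoint M : H →L[𝕜] H) : H →ₗ[𝕜] H), ⟪ψ, φ⟫_𝕜 ≠ 0) :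
    ∀ {n : ℕ} {x : H}, (M ^ n) x = 0 → M x = 0
  | 0, x, hx => by simp_all
  | n + 1, x, hx => by
    rw [pow_succ, mul_apply_eq_comp] at hx
    by_contra hMx
    obtain ⟨ψ, hψ, hne⟩ := hM (M x) (apply_eq_zero_of_pow_apply_eq_zero hM hx) hMx
    exact hne (by rw [← adjoint_inner_left, show adjoint M ψ = 0 from hψ, inner_zero_left])

/- `K` stands for `adjoint M` so that the lemma applies to `M = N* - z̄` without rewriting
`N** - z` inside instance arguments. -/
theorem ContinuousLinearMap.tfae_range_eq_ker_of_commute {M E K : H →L[𝕜] H}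
    (hK : adjoint M = K)
    (hME : M * E = E * M) (hfix : ∀ φ ∈ LinearMap.ker (M : H →ₗ[𝕜] H), E φ = φ)
    (hnil : ∃ n : ℕ, M ^ n * E = 0)
    [FiniteDimensional 𝕜 (LinearMap.ker (M : H →ₗ[𝕜] H))]
    [FiniteDimensional 𝕜 (LinearMap.ker (K : H →ₗ[𝕜] H))]
    (hdim : Module.finrank 𝕜 (LinearMap.ker (M : H →ₗ[𝕜] H)) =
      Module.finrank 𝕜 (LinearMap.ker (K : H →ₗ[𝕜] H))) :
    [ LinearMap.range (E : H →ₗ[𝕜] H) = LinearMap.ker (M : H →ₗ[𝕜] H),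
      ∀ φ ∈ LinearMap.ker (M : H →ₗ[𝕜] H), φ ≠ 0 →
        ∃ ψ ∈ LinearMap.ker (K : H →ₗ[𝕜] H), ⟪ψ, φ⟫_𝕜 ≠ 0,
      Function.Bijective (fun φ : LinearMap.ker (M : H →ₗ[𝕜] H) =>
        (LinearMap.ker (K : H →ₗ[𝕜] H)).orthogonalProjectionOnto (φ : H)),
      M * E = 0 ].TFAE := by
  subst hK
  tfae_have 1 → 4 := fun h => ext fun x => by
    have hx : E x ∈ LinearMap.ker (M : H →ₗ[𝕜] H) := h ▸ LinearMap.mem_range_self _ x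
    simpa using hx
  tfae_have 4 → 2 := by
    intro h φ hφ hφ₀
    by_contra! hperp
    have hclosure : (LinearMap.range (M : H →ₗ[𝕜] H)).topologicalClosure ≤
        LinearMap.ker (E : H →ₗ[𝕜] H) := by
      refine Submodule.topologicalClosure_minimal _ ?_ E.isClosed_ker
      rintro _ ⟨x, rfl⟩
      simpa [mul_apply_eq_comp] using congr($(hME.symm.trans h) x)
    rw [← Submodule.orthogonal_orthogonal_eq_closure, orthogonal_range] at hclosure
    have hEφ : E φ = 0 := hclosure (((LinearMap.ker _).mem_orthogonal φ).2 hperp)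
    exact hφ₀ (hfix φ hφ ▸ hEφ)
  tfae_have 2 → 1 := by
    intro h
    obtain ⟨n, hn⟩ := hnil
    refine le_antisymm ?_ fun φ hφ => ⟨φ, hfix φ hφ⟩
    rintro _ ⟨x, rfl⟩
    exact apply_eq_zero_of_pow_apply_eq_zero h (x := E x) (by simpa using congr($hn x))
  tfae_have 2 ↔ 3 := (Submodule.bijective_orthogonalProjectionOnto_iff hdim).symm
  tfae_finish

end Hilbert

theorem ContinuousLinearMap.finiteDimensional_range_adjoint {𝕜 E F : Type*} [RCLike 𝕜]
    [NormedAddCommGroup E] [InnerProductSpace 𝕜 E] [CompleteSpace E]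
    [NormedAddCommGroup F] [InnerProductSpace 𝕜 F] [CompleteSpace F] (A : E →L[𝕜] F)
    [FiniteDimensional 𝕜 (LinearMap.range (A : E →ₗ[𝕜] F))] :
    FiniteDimensional 𝕜 (LinearMap.range ((adjoint A : F →L[𝕜] E) : F →ₗ[𝕜] E)) := by
  set K := LinearMap.range (A : E →ₗ[𝕜] F)
  refine Submodule.finiteDimensional_of_le (S₂ := K.map (adjoint A : F →ₗ[𝕜] E)) ?_
  rintro _ ⟨y, rfl⟩
  refine ⟨K.starProjection y, K.starProjection_apply_mem y, ?_⟩
  have hy : y - K.starProjection y ∈ LinearMap.ker (adjoint A : F →ₗ[𝕜] E) :=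
    orthogonal_range A ▸ K.sub_starProjection_mem_orthogonal y
  exact (sub_eq_zero.1 (by simpa using hy)).symm

theorem Metric.sphere_subset_closedBall_sdiff_singleton {X : Type*} [PseudoMetricSpace X] {c : X}
    {r ρ : ℝ} (hr : 0 < r) (hrρ : r ≤ ρ) : sphere c r ⊆ closedBall c ρ \ {c} := fun _ hx =>
  ⟨closedBall_subset_closedBall hrρ (sphere_subset_closedBall hx), ne_of_mem_sphere hx hr.ne'⟩

section Resolvent

variable {H : Type*} [NormedAddCommGroup H] [NormedSpace ℂ H]

def IsPuncturedResolvent (N : H →L[ℂ] H) (z : ℂ) (ρ : ℝ) (Res : ℂ → H →L[ℂ] H) : Prop :=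
  ∀ ζ : ℂ, 0 < ‖ζ - z‖ → ‖ζ - z‖ ≤ ρ →
    (N - ζ • (1 : H →L[ℂ] H)) * Res ζ = 1 ∧ Res ζ * (N - ζ • (1 : H →L[ℂ] H)) = 1

theorem rieszE_apply [CompleteSpace H] {Res : ℂ → H →L[ℂ] H} {z : ℂ} {ρ : ℝ}
    (hRes : CircleIntegrable Res z ρ) (x : H) :
    rieszE Res z ρ x = -((2 * (Real.pi : ℂ) * I)⁻¹ • ∮ ζ in C(z, ρ), Res ζ x) := by
  have := (apply ℂ H x).circleIntegral_comp_comm hRes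
  simp only [apply_apply] at this
  rw [rieszE, neg_apply, smul_apply, this]

namespace IsPuncturedResolvent

variable {N : H →L[ℂ] H} {z : ℂ} {ρ : ℝ} {Res : ℂ → H →L[ℂ] H}

theorem mul_eq_one (h : IsPuncturedResolvent N z ρ Res) {ζ : ℂ}
    (hζ : ζ ∈ closedBall z ρ \ {z}) :
    (N - ζ • (1 : H →L[ℂ] H)) * Res ζ = 1 ∧ Res ζ * (N - ζ • (1 : H →L[ℂ] H)) = 1 :=
  h ζ (norm_pos_iff.2 (sub_ne_zero.2 hζ.2)) (by simpa [dist_eq_norm] using hζ.1)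

theorem eqOn_ring_inverse (h : IsPuncturedResolvent N z ρ Res) :
    EqOn Res (fun ζ => Ring.inverse (N - ζ • (1 : H →L[ℂ] H))) (closedBall z ρ \ {z}) :=
  fun _ hζ => (Ring.inverse_unit ⟨_, _, (h.mul_eq_one hζ).1, (h.mul_eq_one hζ).2⟩).symm

theorem isUnit (h : IsPuncturedResolvent N z ρ Res) {ζ : ℂ} (hζ : ζ ∈ closedBall z ρ \ {z}) :
    IsUnit (N - ζ • (1 : H →L[ℂ] H)) :=
  ⟨⟨_, Res ζ, (h.mul_eq_one hζ).1, (h.mul_eq_one hζ).2⟩, rfl⟩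

theorem sub_eq_smul_mul (h : IsPuncturedResolvent N z ρ Res) {ζ ω : ℂ}
    (hζ : ζ ∈ closedBall z ρ \ {z}) (hω : ω ∈ closedBall z ρ \ {z}) :
    Res ζ - Res ω = (ζ - ω) • (Res ζ * Res ω) := by
  calc Res ζ - Res ω
      = Res ζ * ((N - ω • (1 : H →L[ℂ] H)) * Res ω)
          - Res ζ * (N - ζ • (1 : H →L[ℂ] H)) * Res ω := by
        rw [(h.mul_eq_one hω).1, (h.mul_eq_one hζ).2, mul_one, one_mul]
    _ = Res ζ * ((ζ - ω) • (1 : H →L[ℂ] H)) * Res ω := by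
        rw [sub_smul]; noncomm_ring
    _ = (ζ - ω) • (Res ζ * Res ω) := by
        rw [mul_smul_comm, mul_one, smul_mul_assoc]

theorem sub_smul_apply_eigenvector (h : IsPuncturedResolvent N z ρ Res) {ζ : ℂ}
    (hζ : ζ ∈ closedBall z ρ \ {z}) {μ : ℂ} {v : H} (hv : N v = μ • v) :
    (μ - ζ) • Res ζ v = v := by
  have := congr($((h.mul_eq_one hζ).2) v)
  simpa [hv, sub_smul] using this

variable [CompleteSpace H]

theorem differentiableAt_ring_inverse (h : IsPuncturedResolvent N z ρ Res) {ζ : ℂ}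
    (hζ : ζ ∈ closedBall z ρ \ {z}) :
    DifferentiableAt ℂ (fun ζ => Ring.inverse (N - ζ • (1 : H →L[ℂ] H))) ζ := by
  have hlin : DifferentiableAt ℂ (fun ζ : ℂ => N - ζ • (1 : H →L[ℂ] H)) ζ := by fun_prop
  exact (differentiableAt_inverse (h.isUnit hζ)).comp ζ hlin

theorem continuousOn (h : IsPuncturedResolvent N z ρ Res) :
    ContinuousOn Res (closedBall z ρ \ {z}) :=
  fun _ hζ => ((h.differentiableAt_ring_inverse hζ).continuousAt.continuousWithinAt).congr
    h.eqOn_ring_inverse (h.eqOn_ring_inverse hζ)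

theorem circleIntegrable (h : IsPuncturedResolvent N z ρ Res) {r : ℝ} (hr : 0 < r)
    (hrρ : r ≤ ρ) : CircleIntegrable Res z r :=
  (h.continuousOn.mono (sphere_subset_closedBall_sdiff_singleton hr hrρ)).circleIntegrable hr.le

theorem circleIntegral_eq_of_le (h : IsPuncturedResolvent N z ρ Res) {r : ℝ} (hr : 0 < r)
    (hrρ : r ≤ ρ) : ∮ ζ in C(z, r), Res ζ = ∮ ζ in C(z, ρ), Res ζ := by
  have hann : closedBall z ρ \ ball z r ⊆ closedBall z ρ \ {z} :=
    sdiff_subset_sdiff_right (singleton_subset_iff.2 (mem_ball_self hr))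
  have hρ : 0 < ρ := hr.trans_le hrρ
  rw [circleIntegral.integral_congr hr.le
      (h.eqOn_ring_inverse.mono (sphere_subset_closedBall_sdiff_singleton hr hrρ)),
    circleIntegral.integral_congr hρ.le
      (h.eqOn_ring_inverse.mono (sphere_subset_closedBall_sdiff_singleton hρ le_rfl))]
  refine (circleIntegral_eq_of_differentiable_on_annulus_off_countable hr hrρ countable_empty
    (fun ζ hζ => (h.differentiableAt_ring_inverse (hann hζ)).continuousAt.continuousWithinAt)
    fun ζ hζ => h.differentiableAt_ring_inverse ⟨ball_subset_closedBall hζ.1.1, ?_⟩).symm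
  rintro rfl
  exact hζ.1.2 (mem_closedBall_self hr.le)

theorem rieszE_apply_of_eigenvector (h : IsPuncturedResolvent N z ρ Res) (hρ : 0 < ρ) {μ : ℂ}
    {v : H} (hv : N v = μ • v) (hμ : μ ∉ sphere z ρ) :
    rieszE Res z ρ v = ((2 * (Real.pi : ℂ) * I)⁻¹ * ∮ ζ in C(z, ρ), (ζ - μ)⁻¹) • v := by
  have hcongr : EqOn (fun ζ => Res ζ v) (fun ζ => (ζ - μ)⁻¹ • -v) (sphere z ρ) := fun ζ hζ => by
    have hne : ζ - μ ≠ 0 := sub_ne_zero.2 fun hζμ => hμ (hζμ ▸ hζ)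
    rw [eq_inv_smul_iff₀ hne, ← neg_sub μ ζ, neg_smul,
      h.sub_smul_apply_eigenvector (sphere_subset_closedBall_sdiff_singleton hρ le_rfl hζ) hv]
  rw [rieszE_apply (h.circleIntegrable hρ le_rfl), circleIntegral.integral_congr hρ.le hcongr,
    circleIntegral.integral_smul_const, smul_neg, smul_neg, neg_neg, smul_smul]

theorem rieszE_apply_of_mem_ker (h : IsPuncturedResolvent N z ρ Res) (hρ : 0 < ρ) {φ : H}
    (hφ : φ ∈ LinearMap.ker ((N - z • 1 : H →L[ℂ] H) : H →ₗ[ℂ] H)) :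
    rieszE Res z ρ φ = φ := by
  have hv : N φ = z • φ := by simpa [sub_eq_zero] using hφ
  rw [h.rieszE_apply_of_eigenvector hρ hv (by simp [hρ.ne]),
    circleIntegral.integral_sub_center_inv z hρ.ne', inv_mul_cancel₀ two_pi_I_ne_zero, one_smul]

theorem rieszE_apply_eq_zero_of_eigenvector (h : IsPuncturedResolvent N z ρ Res) (hρ : 0 < ρ)
    {μ : ℂ} (hμ : ρ < ‖μ - z‖) {v : H} (hv : N v = μ • v) : rieszE Res z ρ v = 0 := by
  have hμ' : μ ∉ closedBall z ρ := by simpa [dist_eq_norm] using hμ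
  rw [h.rieszE_apply_of_eigenvector hρ hv fun hs => hμ' (sphere_subset_closedBall hs),
    circleIntegral_sub_inv_of_notMem_closedBall hρ.le hμ', mul_zero, zero_smul]

theorem circleIntegrable_sub_smul (h : IsPuncturedResolvent N z ρ Res) (hρ : 0 < ρ) :
    CircleIntegrable (fun ζ => (ζ - z) • Res ζ) z ρ :=
  ((continuous_id.sub continuous_const).continuousOn.smul (h.continuousOn.mono
    (sphere_subset_closedBall_sdiff_singleton hρ le_rfl))).circleIntegrable hρ.le

theorem sub_smul_one_mul_rieszE (h : IsPuncturedResolvent N z ρ Res) (hρ : 0 < ρ) :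
    (N - z • (1 : H →L[ℂ] H)) * rieszE Res z ρ = rieszD Res z ρ := by
  have hcongr : EqOn (fun ζ => (N - z • (1 : H →L[ℂ] H)) * Res ζ) (fun ζ => 1 + (ζ - z) • Res ζ)
      (sphere z ρ) := fun ζ hζ => by
    dsimp only
    rw [show N - z • (1 : H →L[ℂ] H) = (N - ζ • 1) + (ζ - z) • 1 by rw [sub_smul]; abel, add_mul,
      (h.mul_eq_one (sphere_subset_closedBall_sdiff_singleton hρ le_rfl hζ)).1, smul_one_mul]
  have hcomm := (mul ℂ (H →L[ℂ] H) (N - z • 1)).circleIntegral_comp_comm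
    (h.circleIntegrable hρ le_rfl)
  simp only [mul_apply'] at hcomm
  rw [rieszE, rieszD, mul_neg, mul_smul_comm, ← hcomm, circleIntegral.integral_congr hρ.le hcongr,
    circleIntegral.integral_add (circleIntegrable_const _ _ _) (h.circleIntegrable_sub_smul hρ),
    circleIntegral_const, zero_add]

theorem rieszE_mul_sub_smul_one (h : IsPuncturedResolvent N z ρ Res) (hρ : 0 < ρ) :
    rieszE Res z ρ * (N - z • (1 : H →L[ℂ] H)) = rieszD Res z ρ := by
  have hcongr : EqOn (fun ζ => Res ζ * (N - z • (1 : H →L[ℂ] H))) (fun ζ => 1 + (ζ - z) • Res ζ)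
      (sphere z ρ) := fun ζ hζ => by
    dsimp only
    rw [show N - z • (1 : H →L[ℂ] H) = (N - ζ • 1) + (ζ - z) • 1 by rw [sub_smul]; abel, mul_add,
      (h.mul_eq_one (sphere_subset_closedBall_sdiff_singleton hρ le_rfl hζ)).2, mul_smul_one]
  have hcomm := ((mul ℂ (H →L[ℂ] H)).flip (N - z • 1)).circleIntegral_comp_comm
    (h.circleIntegrable hρ le_rfl)
  simp only [flip_apply, mul_apply'] at hcomm
  rw [rieszE, rieszD, neg_mul, smul_mul_assoc, ← hcomm, circleIntegral.integral_congr hρ.le hcongr,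
    circleIntegral.integral_add (circleIntegrable_const _ _ _) (h.circleIntegrable_sub_smul hρ),
    circleIntegral_const, zero_add]

theorem rieszE_mul_of_mem_ball (h : IsPuncturedResolvent N z ρ Res) (hρ : 0 < ρ) {ω : ℂ}
    (hω : ω ∈ ball z ρ \ {z}) :
    rieszE Res z ρ * Res ω
      = Res ω - (2 * (Real.pi : ℂ) * I)⁻¹ • ∮ ζ in C(z, ρ), (ζ - ω)⁻¹ • Res ζ := by
  have hsphere := sphere_subset_closedBall_sdiff_singleton (c := z) hρ le_rfl
  have hω' : ω ∈ closedBall z ρ \ {z} := ⟨ball_subset_closedBall hω.1, hω.2⟩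
  have hne : ∀ ζ ∈ sphere z ρ, ζ - ω ≠ 0 := fun ζ hζ hζω =>
    (sphere_disjoint_ball.ne_of_mem hζ hω.1) (sub_eq_zero.1 hζω)
  have hcongr : EqOn (fun ζ => Res ζ * Res ω) (fun ζ => (ζ - ω)⁻¹ • Res ζ - (ζ - ω)⁻¹ • Res ω)
      (sphere z ρ) := fun ζ hζ => by
    dsimp only
    rw [← smul_sub, h.sub_eq_smul_mul (hsphere hζ) hω', inv_smul_smul₀ (hne ζ hζ)]
  have hinv : ContinuousOn (fun ζ => (ζ - ω)⁻¹) (sphere z ρ) :=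
    (continuous_id.sub continuous_const).continuousOn.inv₀ hne
  have hint₁ : CircleIntegrable (fun ζ => (ζ - ω)⁻¹ • Res ζ) z ρ :=
    (hinv.smul (h.continuousOn.mono hsphere)).circleIntegrable hρ.le
  have hint₂ : CircleIntegrable (fun ζ => (ζ - ω)⁻¹ • Res ω) z ρ :=
    (hinv.smul continuousOn_const).circleIntegrable hρ.le
  have hcomm := ((mul ℂ (H →L[ℂ] H)).flip (Res ω)).circleIntegral_comp_comm
    (h.circleIntegrable hρ le_rfl)
  simp only [flip_apply, mul_apply'] at hcomm
  rw [rieszE, neg_mul, smul_mul_assoc, ← hcomm, circleIntegral.integral_congr hρ.le hcongr,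
    circleIntegral.integral_sub hint₁ hint₂,
    circleIntegral.integral_smul_const, circleIntegral.integral_sub_inv_of_mem_ball hω.1,
    smul_sub, smul_smul, inv_mul_cancel₀ two_pi_I_ne_zero, one_smul, neg_sub]

/- Integrating the second factor over the circle of radius `ρ / 2`, `rieszE_mul_of_mem_ball`
leaves a Cauchy integral over the outer circle, which is holomorphic inside it. -/
theorem rieszE_mul_self (h : IsPuncturedResolvent N z ρ Res) (hρ : 0 < ρ) :
    rieszE Res z ρ * rieszE Res z ρ = rieszE Res z ρ := by
  have hr : 0 < ρ / 2 := half_pos hρ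
  have hrρ : ρ / 2 < ρ := half_lt_self hρ
  have hsphere : sphere z (ρ / 2) ⊆ ball z ρ \ {z} := fun ω hω =>
    ⟨sphere_subset_ball hrρ hω, ne_of_mem_sphere hω hr.ne'⟩
  have hE : rieszE Res z ρ = -((2 * (Real.pi : ℂ) * I)⁻¹ • ∮ ω in C(z, ρ / 2), Res ω) := by
    rw [rieszE, h.circleIntegral_eq_of_le hr hrρ.le]
  have hG : CircleIntegrable
      (fun ω => (2 * (Real.pi : ℂ) * I)⁻¹ • ∮ ζ in C(z, ρ), (ζ - ω)⁻¹ • Res ζ) z (ρ / 2) :=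
    (((differentiableOn_circleIntegral_sub_inv_smul (h.circleIntegrable hρ le_rfl)).continuousOn
      |>.const_smul (2 * (Real.pi : ℂ) * I)⁻¹).mono (sphere_subset_ball hrρ)).circleIntegrable hr.le
  have hint := h.circleIntegrable hr hrρ.le
  have hcomm := (mul ℂ (H →L[ℂ] H) (rieszE Res z ρ)).circleIntegral_comp_comm hint
  simp only [mul_apply'] at hcomm
  nth_rewrite 2 [hE]
  rw [mul_neg, mul_smul_comm, ← hcomm,
    circleIntegral.integral_congr hr.le fun ω hω => h.rieszE_mul_of_mem_ball hρ (hsphere hω),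
    circleIntegral.integral_sub hint hG, circleIntegral.integral_smul,
    circleIntegral_circleIntegral_sub_inv_smul_eq_zero (h.circleIntegrable hρ le_rfl) hr.le hrρ,
    smul_zero, sub_zero, ← hE]

theorem eq_zero_of_eigenvector_mem_range_rieszE (h : IsPuncturedResolvent N z ρ Res) (hρ : 0 < ρ)
    {v : H} (hv : v ∈ LinearMap.range (rieszE Res z ρ : H →ₗ[ℂ] H)) (hv₀ : v ≠ 0) {μ : ℂ}
    (hμ : (N - z • (1 : H →L[ℂ] H)) v = μ • v) : μ = 0 := by
  have hNv : N v = (z + μ) • v := by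
    rw [add_smul, ← hμ]; simp
  by_contra hμ₀
  rcases le_or_gt ‖μ‖ ρ with hle | hlt
  · refine hv₀ ?_
    have hball : z + μ ∈ closedBall z ρ \ {z} := by simpa [dist_eq_norm] using ⟨hle, hμ₀⟩
    simpa using (h.sub_smul_apply_eigenvector hball hNv).symm
  · obtain ⟨u, hu⟩ := hv
    have hfix : rieszE Res z ρ v = v := by
      rw [← hu, ContinuousLinearMap.coe_coe, ← mul_apply_eq_comp, h.rieszE_mul_self hρ]
    exact hv₀ (hfix ▸ h.rieszE_apply_eq_zero_of_eigenvector hρ (by simpa using hlt) hNv)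

theorem exists_pow_mul_rieszE_eq_zero (h : IsPuncturedResolvent N z ρ Res) (hρ : 0 < ρ)
    [FiniteDimensional ℂ (LinearMap.range (rieszE Res z ρ : H →ₗ[ℂ] H))] :
    ∃ n : ℕ, (N - z • (1 : H →L[ℂ] H)) ^ n * rieszE Res z ρ = 0 := by
  set M := N - z • (1 : H →L[ℂ] H)
  set E := rieszE Res z ρ
  have hME : M * E = E * M := by
    rw [h.sub_smul_one_mul_rieszE hρ, h.rieszE_mul_sub_smul_one hρ]
  have hinv : ∀ x ∈ LinearMap.range (E : H →ₗ[ℂ] H), M x ∈ LinearMap.range (E : H →ₗ[ℂ] H) :=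
    by
    rintro _ ⟨u, rfl⟩
    exact ⟨M u, by simpa using congr($hME u).symm⟩
  obtain ⟨n, hn⟩ := Module.End.isNilpotent_of_forall_hasEigenvalue
    (f := (M : H →ₗ[ℂ] H).restrict hinv) fun μ hμ => by
      obtain ⟨v, hv⟩ := hμ.exists_hasEigenvector
      exact h.eq_zero_of_eigenvector_mem_range_rieszE hρ v.2 (by simpa using hv.2)
        congr(Subtype.val $(hv.apply_eq_smul))
  refine ⟨n, ext fun x => ?_⟩
  have := congr(Subtype.val ($hn ⟨E x, LinearMap.mem_range_self _ x⟩))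
  rw [Module.End.pow_restrict, LinearMap.restrict_apply] at this
  simpa [Module.End.pow_apply] using this

end IsPuncturedResolvent

end Resolvent

section Adjoint

variable {H : Type*} [NormedAddCommGroup H] [InnerProductSpace ℂ H] [CompleteSpace H]

theorem ContinuousLinearMap.adjoint_sub_smul_one (N : H →L[ℂ] H) (z : ℂ) :
    adjoint (N - z • (1 : H →L[ℂ] H)) = adjoint N - conj z • (1 : H →L[ℂ] H) := by
  simp [← star_eq_adjoint, star_sub, star_smul]

theorem conj_two_pi_I_inv : conj (2 * (π : ℂ) * I)⁻¹ = -(2 * (π : ℂ) * I)⁻¹ := by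
  simp [conj_ofReal, map_ofNat]

theorem adjoint_rieszE {Res : ℂ → H →L[ℂ] H} {z : ℂ} {ρ : ℝ} (hRes : CircleIntegrable Res z ρ) :
    adjoint (rieszE Res z ρ) = rieszE (fun ζ => adjoint (Res (conj ζ))) (conj z) ρ := by
  rw [rieszE, rieszE, ← star_eq_adjoint, star_neg, star_smul, star_circleIntegral hRes]
  simp only [star_eq_adjoint, RCLike.star_def, conj_two_pi_I_inv, neg_smul, smul_neg, neg_neg]

theorem adjoint_rieszD {Res : ℂ → H →L[ℂ] H} {z : ℂ} {ρ : ℝ}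
    (hRes : CircleIntegrable (fun ζ => (ζ - z) • Res ζ) z ρ) :
    adjoint (rieszD Res z ρ) = rieszD (fun ζ => adjoint (Res (conj ζ))) (conj z) ρ := by
  rw [rieszD, rieszD, ← star_eq_adjoint, star_neg, star_smul, star_circleIntegral hRes]
  simp only [star_smul, star_eq_adjoint, RCLike.star_def, map_sub, conj_conj, conj_two_pi_I_inv,
    neg_smul, smul_neg, neg_neg]

namespace IsPuncturedResolvent

variable {N : H →L[ℂ] H} {z : ℂ} {ρ : ℝ} {Res : ℂ → H →L[ℂ] H}

theorem adjoint (h : IsPuncturedResolvent N z ρ Res) :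
    IsPuncturedResolvent (adjoint N) (conj z) ρ (fun ζ => adjoint (Res (conj ζ))) := by
  intro ζ h₁ h₂
  have hnorm : ‖conj ζ - z‖ = ‖ζ - conj z‖ := by
    rw [← RCLike.norm_conj, map_sub, conj_conj]
  obtain ⟨hright, hleft⟩ := h (conj ζ) (hnorm ▸ h₁) (hnorm ▸ h₂)
  have hM : star (N - conj ζ • (1 : H →L[ℂ] H)) =
      ContinuousLinearMap.adjoint N - ζ • (1 : H →L[ℂ] H) := by
    rw [star_eq_adjoint, adjoint_sub_smul_one, conj_conj]
  constructor
  · simpa only [star_mul, star_one, hM, star_eq_adjoint] using congr(star $hleft)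
  · simpa only [star_mul, star_one, hM, star_eq_adjoint] using congr(star $hright)

theorem tfae_range_rieszE_eq_ker (h : IsPuncturedResolvent N z ρ Res) (hρ : 0 < ρ)
    {K : H →L[ℂ] H} (hK : ContinuousLinearMap.adjoint (N - z • (1 : H →L[ℂ] H)) = K)
    [FiniteDimensional ℂ (LinearMap.range (rieszE Res z ρ : H →ₗ[ℂ] H))]
    [FiniteDimensional ℂ (LinearMap.ker ((N - z • 1 : H →L[ℂ] H) : H →ₗ[ℂ] H))]
    [FiniteDimensional ℂ (LinearMap.ker (K : H →ₗ[ℂ] H))]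
    (hdim : Module.finrank ℂ (LinearMap.ker ((N - z • 1 : H →L[ℂ] H) : H →ₗ[ℂ] H)) =
      Module.finrank ℂ (LinearMap.ker (K : H →ₗ[ℂ] H))) :
    [ LinearMap.range (rieszE Res z ρ : H →ₗ[ℂ] H) =
        LinearMap.ker ((N - z • 1 : H →L[ℂ] H) : H →ₗ[ℂ] H),
      ∀ φ ∈ LinearMap.ker ((N - z • 1 : H →L[ℂ] H) : H →ₗ[ℂ] H), φ ≠ 0 →
        ∃ ψ ∈ LinearMap.ker (K : H →ₗ[ℂ] H), ⟪ψ, φ⟫_ℂ ≠ 0,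
      Function.Bijective (fun φ : LinearMap.ker ((N - z • 1 : H →L[ℂ] H) : H →ₗ[ℂ] H) =>
        (LinearMap.ker (K : H →ₗ[ℂ] H)).orthogonalProjectionOnto (φ : H)),
      rieszD Res z ρ = 0 ].TFAE := by
  rw [← h.sub_smul_one_mul_rieszE hρ]
  refine tfae_range_eq_ker_of_commute hK ?_ (fun φ hφ => h.rieszE_apply_of_mem_ker hρ hφ)
    (h.exists_pow_mul_rieszE_eq_zero hρ) hdim
  rw [h.sub_smul_one_mul_rieszE hρ, h.rieszE_mul_sub_smul_one hρ]

end IsPuncturedResolvent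

end Adjoint

theorem semisimple_tfae_general
    {H : Type*} [NormedAddCommGroup H] [InnerProductSpace ℂ H] [CompleteSpace H]
    (N₀ : H →L[ℂ] H) (z₀ : ℂ) (ρ₀ : ℝ) (hρ₀ : 0 < ρ₀)
    -- the resolvent function on the punctured disc
    (Res : ℂ → (H →L[ℂ] H))
    (hRes : ∀ ζ : ℂ, 0 < ‖ζ - z₀‖ → ‖ζ - z₀‖ ≤ ρ₀ →
      (N₀ - ζ • (1 : H →L[ℂ] H)) * Res ζ = 1 ∧ Res ζ * (N₀ - ζ • (1 : H →L[ℂ] H)) = 1)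
    -- finite rank / finite-dimensionality assumptions
    (hfinE : FiniteDimensional ℂ (LinearMap.range (rieszE Res z₀ ρ₀ : H →ₗ[ℂ] H)))
    [FiniteDimensional ℂ (LinearMap.ker ((N₀ - z₀ • (1 : H →L[ℂ] H) : H →L[ℂ] H) : H →ₗ[ℂ] H))]
    [FiniteDimensional ℂ
      (LinearMap.ker ((adjoint N₀ - (starRingEnd ℂ) z₀ • (1 : H →L[ℂ] H) : H →L[ℂ] H) : H →ₗ[ℂ] H))]
    (hdim : Module.finrank ℂ (LinearMap.ker ((N₀ - z₀ • (1 : H →L[ℂ] H) : H →L[ℂ] H) : H →ₗ[ℂ] H)) =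
      Module.finrank ℂ
        (LinearMap.ker ((adjoint N₀ - (starRingEnd ℂ) z₀ • (1 : H →L[ℂ] H) : H →L[ℂ] H) : H →ₗ[ℂ] H))) :
    [ -- (1) range E = ker (N₀ - z₀)
      LinearMap.range (rieszE Res z₀ ρ₀ : H →ₗ[ℂ] H) = LinearMap.ker ((N₀ - z₀ • (1 : H →L[ℂ] H) : H →L[ℂ] H) : H →ₗ[ℂ] H),
      -- (2) every nonzero eigenvector is non-orthogonal to some adjoint eigenvector
      ∀ φ ∈ LinearMap.ker ((N₀ - z₀ • (1 : H →L[ℂ] H) : H →L[ℂ] H) : H →ₗ[ℂ] H), φ ≠ 0 →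
        ∃ ψ ∈ LinearMap.ker ((adjoint N₀ - (starRingEnd ℂ) z₀ • (1 : H →L[ℂ] H) : H →L[ℂ] H) : H →ₗ[ℂ] H),
          ⟪(ψ : H), (φ : H)⟫_ℂ ≠ 0,
      -- (3) orthogonal projection restricts to an isomorphism of the eigenspaces
      Function.Bijective (fun φ : LinearMap.ker ((N₀ - z₀ • (1 : H →L[ℂ] H) : H →L[ℂ] H) : H →ₗ[ℂ] H) =>
        Submodule.orthogonalProjectionOnto
          (LinearMap.ker ((adjoint N₀ - (starRingEnd ℂ) z₀ • (1 : H →L[ℂ] H) : H →L[ℂ] H) : H →ₗ[ℂ] H)) (φ : H)),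
      -- (4) D = 0
      rieszD Res z₀ ρ₀ = 0,
      -- (5) range E* = ker (N₀* - conj z₀)
      LinearMap.range ((adjoint (rieszE Res z₀ ρ₀) : H →L[ℂ] H) : H →ₗ[ℂ] H) =
        LinearMap.ker ((adjoint N₀ - (starRingEnd ℂ) z₀ • (1 : H →L[ℂ] H) : H →L[ℂ] H) : H →ₗ[ℂ] H),
      -- (6) every nonzero adjoint eigenvector is non-orthogonal to some eigenvector
      ∀ ψ ∈ LinearMap.ker ((adjoint N₀ - (starRingEnd ℂ) z₀ • (1 : H →L[ℂ] H) : H →L[ℂ] H) : H →ₗ[ℂ] H), ψ ≠ 0 →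
        ∃ φ ∈ LinearMap.ker ((N₀ - z₀ • (1 : H →L[ℂ] H) : H →L[ℂ] H) : H →ₗ[ℂ] H), ⟪(φ : H), (ψ : H)⟫_ℂ ≠ 0,
      -- (7) orthogonal projection restricts to an isomorphism the other way
      Function.Bijective
        (fun ψ : LinearMap.ker ((adjoint N₀ - (starRingEnd ℂ) z₀ • (1 : H →L[ℂ] H) : H →L[ℂ] H) : H →ₗ[ℂ] H) =>
          Submodule.orthogonalProjectionOnto
            (LinearMap.ker ((N₀ - z₀ • (1 : H →L[ℂ] H) : H →L[ℂ] H) : H →ₗ[ℂ] H)) (ψ : H)),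
      -- (8) D* = 0
      adjoint (rieszD Res z₀ ρ₀) = 0 ].TFAE := by
  have h : IsPuncturedResolvent N₀ z₀ ρ₀ Res := hRes
  have hE := adjoint_rieszE (h.circleIntegrable hρ₀ le_rfl)
  have hD := adjoint_rieszD (h.circleIntegrable_sub_smul hρ₀)
  have : FiniteDimensional ℂ (LinearMap.range
      (rieszE (fun ζ => adjoint (Res (conj ζ))) (conj z₀) ρ₀ : H →ₗ[ℂ] H)) :=
    hE ▸ finiteDimensional_range_adjoint _
  have tfae := h.tfae_range_rieszE_eq_ker hρ₀ (adjoint_sub_smul_one N₀ z₀) hdim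
  have tfae' := h.adjoint.tfae_range_rieszE_eq_ker hρ₀
    (by rw [adjoint_sub_smul_one, adjoint_adjoint, conj_conj]) hdim.symm
  rw [← hE, ← hD] at tfae'
  tfae_have 1 ↔ 2 := tfae.out 0 1
  tfae_have 1 ↔ 3 := tfae.out 0 2
  tfae_have 1 ↔ 4 := tfae.out 0 3
  tfae_have 5 ↔ 6 := tfae'.out 0 1
  tfae_have 5 ↔ 7 := tfae'.out 0 2
  tfae_have 5 ↔ 8 := tfae'.out 0 3
  tfae_have 4 ↔ 8 := adjoint.map_eq_zero_iff.symm
  tfae_finish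

/-- the eight equivalent characterisations of semisimplicity of an isolated
eigenvalue `z₀` of `N₀`. -/
theorem semisimple_tfae
    {H : Type*} [NormedAddCommGroup H] [InnerProductSpace ℂ H] [CompleteSpace H]
    (N₀ : H →L[ℂ] H) (z₀ : ℂ) (ρ₀ : ℝ) (hρ₀ : 0 < ρ₀)
    -- `z₀` is an isolated point of the spectrum which is an eigenvalue of `N₀`
    (hz₀ : z₀ ∈ spectrum ℂ N₀)
    (hev : ∃ φ : H, φ ≠ 0 ∧ N₀ φ = z₀ • φ)
    (hiso : ∀ ζ : ℂ, 0 < ‖ζ - z₀‖ → ‖ζ - z₀‖ ≤ ρ₀ → ζ ∉ spectrum ℂ N₀)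
    -- the resolvent function on the punctured disc
    (Res : ℂ → (H →L[ℂ] H))
    (hRes : ∀ ζ : ℂ, 0 < ‖ζ - z₀‖ → ‖ζ - z₀‖ ≤ ρ₀ →
      (N₀ - ζ • (1 : H →L[ℂ] H)) * Res ζ = 1 ∧ Res ζ * (N₀ - ζ • (1 : H →L[ℂ] H)) = 1)
    -- finite rank / finite-dimensionality assumptions
    (hfinE : FiniteDimensional ℂ (LinearMap.range (rieszE Res z₀ ρ₀ : H →ₗ[ℂ] H)))
    [FiniteDimensional ℂ (LinearMap.ker ((N₀ - z₀ • (1 : H →L[ℂ] H) : H →L[ℂ] H) : H →ₗ[ℂ] H))]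
    [FiniteDimensional ℂ
      (LinearMap.ker ((adjoint N₀ - (starRingEnd ℂ) z₀ • (1 : H →L[ℂ] H) : H →L[ℂ] H) : H →ₗ[ℂ] H))]
    (hdim : Module.finrank ℂ (LinearMap.ker ((N₀ - z₀ • (1 : H →L[ℂ] H) : H →L[ℂ] H) : H →ₗ[ℂ] H)) =
      Module.finrank ℂ
        (LinearMap.ker ((adjoint N₀ - (starRingEnd ℂ) z₀ • (1 : H →L[ℂ] H) : H →L[ℂ] H) : H →ₗ[ℂ] H))) :
    [ -- (1) range E = ker (N₀ - z₀)
      LinearMap.range (rieszE Res z₀ ρ₀ : H →ₗ[ℂ] H) = LinearMap.ker ((N₀ - z₀ • (1 : H →L[ℂ] H) : H →L[ℂ] H) : H →ₗ[ℂ] H),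
      -- (2) every nonzero eigenvector is non-orthogonal to some adjoint eigenvector
      ∀ φ ∈ LinearMap.ker ((N₀ - z₀ • (1 : H →L[ℂ] H) : H →L[ℂ] H) : H →ₗ[ℂ] H), φ ≠ 0 →
        ∃ ψ ∈ LinearMap.ker ((adjoint N₀ - (starRingEnd ℂ) z₀ • (1 : H →L[ℂ] H) : H →L[ℂ] H) : H →ₗ[ℂ] H),
          ⟪(ψ : H), (φ : H)⟫_ℂ ≠ 0,
      -- (3) orthogonal projection restricts to an isomorphism of the eigenspaces
      Function.Bijective (fun φ : LinearMap.ker ((N₀ - z₀ • (1 : H →L[ℂ] H) : H →L[ℂ] H) : H →ₗ[ℂ] H) =>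
        Submodule.orthogonalProjectionOnto
          (LinearMap.ker ((adjoint N₀ - (starRingEnd ℂ) z₀ • (1 : H →L[ℂ] H) : H →L[ℂ] H) : H →ₗ[ℂ] H)) (φ : H)),
      -- (4) D = 0
      rieszD Res z₀ ρ₀ = 0,
      -- (5) range E* = ker (N₀* - conj z₀)
      LinearMap.range ((adjoint (rieszE Res z₀ ρ₀) : H →L[ℂ] H) : H →ₗ[ℂ] H) =
        LinearMap.ker ((adjoint N₀ - (starRingEnd ℂ) z₀ • (1 : H →L[ℂ] H) : H →L[ℂ] H) : H →ₗ[ℂ] H),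
      -- (6) every nonzero adjoint eigenvector is non-orthogonal to some eigenvector
      ∀ ψ ∈ LinearMap.ker ((adjoint N₀ - (starRingEnd ℂ) z₀ • (1 : H →L[ℂ] H) : H →L[ℂ] H) : H →ₗ[ℂ] H), ψ ≠ 0 →
        ∃ φ ∈ LinearMap.ker ((N₀ - z₀ • (1 : H →L[ℂ] H) : H →L[ℂ] H) : H →ₗ[ℂ] H), ⟪(φ : H), (ψ : H)⟫_ℂ ≠ 0,
      -- (7) orthogonal projection restricts to an isomorphism the other way
      Function.Bijective
        (fun ψ : LinearMap.ker ((adjoint N₀ - (starRingEnd ℂ) z₀ • (1 : H →L[ℂ] H) : H →L[ℂ] H) : H →ₗ[ℂ] H) =>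
          Submodule.orthogonalProjectionOnto
            (LinearMap.ker ((N₀ - z₀ • (1 : H →L[ℂ] H) : H →L[ℂ] H) : H →ₗ[ℂ] H)) (ψ : H)),
      -- (8) D* = 0
      adjoint (rieszD Res z₀ ρ₀) = 0 ].TFAE :=
  semisimple_tfae_general N₀ z₀ ρ₀ hρ₀ Res hRes hfinE hdim
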